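/- arXiv:2203.03398 — 5 statements merged into one kernel-verified Lean document; each statement's English description precedes it below -/
import Mathlib

section
/- Define, for real pF with pS + pF > n + 1, the function ε(pF) = (n·pS/((pS+pF)·(pS+pF−n−1)))·(c + σ²) + (1 − n/(pS+pF) − pF·n·(pS+pF−n)/((pS+pF−1)·(pS+pF)·(pS+pF+2)))·s + c, where n ≥ 1, pS ≥ 1 are fixed reals, s > 0, c ≥ 0, σ² ≥ 0. Then there exists P such that for all pF > P, ε(pF) < s + c; i.e., ε approaches its limit s + c from below as pF → ∞. -/
/-- Corollary 1(ii): the expected MSE eventually lies strictly below its limit `s + c`. -/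
theorem stmt1 (n pS c s σ2 : ℝ) (hn : 1 ≤ n) (hpS : 1 ≤ pS) (hs : 0 < s)
    (hc : 0 ≤ c) (hσ : 0 ≤ σ2) :
    ∃ P : ℝ, ∀ pF : ℝ, P < pF → pS + pF > n + 1 →
      (n * pS / ((pS + pF) * (pS + pF - n - 1))) * (c + σ2)
        + (1 - n / (pS + pF)
            - pF * n * (pS + pF - n) / ((pS + pF - 1) * (pS + pF) * (pS + pF + 2))) * s
        + c < s + c := by
  refine ⟨n + 1 + pS * (c + σ2) / s, fun pF hP hbig => ?_⟩
  set p := pS + pF with hpdef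
  have hn0 : (0:ℝ) < n := by linarith
  have hp0 : (0:ℝ) < p := by linarith
  have hpF : (0:ℝ) < pF := by
    have : 0 ≤ pS * (c + σ2) / s := by positivity
    linarith
  have hd0 : (0:ℝ) < p - n - 1 := by linarith
  -- key: s * (p - n - 1) > pS * (c + σ2)
  have hkey : pS * (c + σ2) < s * (p - n - 1) := by
    have h1 : pS * (c + σ2) / s < p - n - 1 := by
      have : pS * (c + σ2) / s < pF - 1 := by linarith
      linarith
    calc pS * (c + σ2) = pS * (c + σ2) / s * s := by field_simp
    _ < (p - n - 1) * s := by exact mul_lt_mul_of_pos_right h1 hs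
    _ = s * (p - n - 1) := by ring
  have hA : n * pS / (p * (p - n - 1)) * (c + σ2) < n / p * s := by
    rw [div_mul_eq_mul_div, div_mul_eq_mul_div, div_lt_div_iff₀ (by positivity) hp0]
    nlinarith [mul_pos hn0 hp0]
  have hC : 0 ≤ pF * n * (p - n) / ((p - 1) * p * (p + 2)) := by
    have h1 : (0:ℝ) < pF * n * (p - n) := by
      have : (0:ℝ) < p - n := by linarith
      positivity
    have h2 : (0:ℝ) < (p - 1) * p * (p + 2) := by
      have : (0:ℝ) < p - 1 := by linarith
      positivity
    positivity
  have hCs : 0 ≤ pF * n * (p - n) / ((p - 1) * p * (p + 2)) * s :=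
    mul_nonneg hC hs.le
  nlinarith [hA, hCs]
end

section
/- Let n, pS be positive reals with n > pS + 1, let T > 0, σ² ≥ 0, 0 ≤ r ≤ 1, and set s = r·T, c = (1−r)·T. If r < (pS/(n−1))·(T + σ²)/T, then T < c + (pS/(n−pS−1))·(c + σ²). -/
/-- Corollary 2, underparametrized case. -/
theorem stmt2 (n pS T σ2 r s c : ℝ) (hn : 0 < n) (hpS : 0 < pS) (h1 : pS + 1 < n)
    (hT : 0 < T) (hσ : 0 ≤ σ2) (hr0 : 0 ≤ r) (hr1 : r ≤ 1)
    (hsdef : s = r * T) (hcdef : c = (1 - r) * T)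
    (hr : r < pS / (n - 1) * ((T + σ2) / T)) :
    T < c + pS / (n - pS - 1) * (c + σ2) := by
  have hd : 0 < n - pS - 1 := by linarith
  have hn1 : 0 < n - 1 := by linarith
  rw [div_mul_div_comm, lt_div_iff₀ (by positivity)] at hr
  subst hcdef
  rw [div_mul_eq_mul_div, ← sub_lt_iff_lt_add', lt_div_iff₀ hd]
  nlinarith
end

section
/- Let n, pS be positive reals with pS > n + 1, let T > 0, σ² ≥ 0, 0 ≤ r ≤ 1, and set s = r·T, c = (1−r)·T. If r < (pS/(2·pS − n − 1))·(T + σ²)/T, then T < c + (n/(pS−n−1))·(c + σ²) + (1 − n/pS)·s. -/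
/-!
Subtracting `T` from the right-hand side, the signal terms `-r T + r T` cancel and what is left is
`n / (pS (pS - n - 1)) * (pS (T + σ²) - (2 pS - n - 1) r T)`; the bound on `r` says exactly that the
bracket is positive.
-/

lemma excess_mse_eq (n pS T σ2 r : ℝ) (hd : pS - n - 1 ≠ 0) (hp : pS ≠ 0) :
    (1 - r) * T + n / (pS - n - 1) * ((1 - r) * T + σ2) + (1 - n / pS) * (r * T) - T
      = n / (pS * (pS - n - 1)) * (pS * (T + σ2) - (2 * pS - n - 1) * (r * T)) := by
  field_simp
  ring

lemma mul_lt_of_lt_div_mul_div {a b u v r : ℝ} (ha : 0 < a) (hb : 0 < b)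
    (hr : r < u / a * (v / b)) : a * (r * b) < u * v := by
  rw [div_mul_div_comm, lt_div_iff₀ (mul_pos ha hb)] at hr
  linarith

theorem stmt3_general (n pS T σ2 r s c : ℝ) (hn : 0 < n) (h1 : n + 1 < pS)
    (hT : 0 < T)
    (hsdef : s = r * T) (hcdef : c = (1 - r) * T)
    (hr : r < pS / (2 * pS - n - 1) * ((T + σ2) / T)) :
    T < c + n / (pS - n - 1) * (c + σ2) + (1 - n / pS) * s := by
  subst hsdef hcdef
  have hd : 0 < pS - n - 1 := by linarith
  have hp : 0 < pS := by linarith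
  have hbracket : 0 < pS * (T + σ2) - (2 * pS - n - 1) * (r * T) :=
    sub_pos.mpr (mul_lt_of_lt_div_mul_div (by linarith) hT hr)
  have hexcess := excess_mse_eq n pS T σ2 r hd.ne' hp.ne'
  have hpos : 0 < n / (pS * (pS - n - 1)) * (pS * (T + σ2) - (2 * pS - n - 1) * (r * T)) := by
    positivity
  linarith

/-- Corollary 2, overparametrized case with `pF = 0`. -/
theorem stmt3 (n pS T σ2 r s c : ℝ) (hn : 0 < n) (hpS : 0 < pS) (h1 : n + 1 < pS)
    (hT : 0 < T) (hσ : 0 ≤ σ2) (hr0 : 0 ≤ r) (hr1 : r ≤ 1)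
    (hsdef : s = r * T) (hcdef : c = (1 - r) * T)
    (hr : r < pS / (2 * pS - n - 1) * ((T + σ2) / T)) :
    T < c + n / (pS - n - 1) * (c + σ2) + (1 - n / pS) * s :=
  stmt3_general n pS T σ2 r s c hn h1 hT hsdef hcdef hr
end

section
/- Let V be a p × p Haar-distributed random orthogonal matrix with p > 1, let i ≠ j be distinct row indices and l ≠ k distinct column indices. Then E[v_{il}·v_{jl}·v_{ik}·v_{jk}] = −1/((p−1)·p·(p+2)). -/
/-!
Write `x = v_ik`, `y = v_jk` and `N = p`. Row and column permutations preserve the Haar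
measure, so the orthonormality of the columns gives `N E[x²] = 1` and, after multiplying by
`x²`, `E[x⁴] + (N - 1) E[x²y²] = E[x²]`; orthogonality of rows `i` and `j`, multiplied by
`v_ik v_jk`, gives `E[x²y²] + (N - 1) E[v_il v_jl v_ik v_jk] = 0`. The missing relation
`E[x⁴] = 3 E[x²y²]` comes from the reflections in the vectors `e_i ± 2 e_j`, which map `x` to
`(3x ∓ 4y)/5`: the fourth moments of these two images sum to `2 E[x⁴]`, and their cross terms
of odd degree cancel.
-/

open MeasureTheory Matrix

instance matrixMeasurableSpace (m n : Type*) : MeasurableSpace (Matrix m n ℝ) :=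
  inferInstanceAs (MeasurableSpace (m → n → ℝ))

instance matrixBorelSpace (m n : Type*) [Countable m] [Countable n] :
    BorelSpace (Matrix m n ℝ) :=
  inferInstanceAs (BorelSpace (m → n → ℝ))

theorem Continuous.integrable_of_compactSpace {X : Type*} [TopologicalSpace X] [CompactSpace X]
    [MeasurableSpace X] [OpensMeasurableSpace X] {μ : Measure X} [IsFiniteMeasure μ]
    {f : X → ℝ} (hf : Continuous f) : Integrable f μ :=
  hf.integrable_of_hasCompactSupport (HasCompactSupport.of_compactSpace f)

variable {n : Type*} [Fintype n] [DecidableEq n]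

lemma Finset.sum_univ_eq_add_card_sub_one_mul {f : n → ℝ} {i j : n} (h : ∀ m ≠ i, f m = f j) :
    ∑ m, f m = f i + (Fintype.card n - 1) * f j := by
  rw [← Finset.add_sum_erase _ _ (Finset.mem_univ i),
    Finset.sum_congr rfl fun m hm => h m (Finset.ne_of_mem_erase hm), Finset.sum_const,
    Finset.card_erase_of_mem (Finset.mem_univ i), nsmul_eq_mul, Finset.card_univ,
    Nat.cast_sub (Fintype.card_pos_iff.mpr ⟨i⟩)]
  simp

namespace Matrix

@[fun_prop]
lemma continuous_orthogonalGroup_apply (a b : n) :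
    Continuous (fun V : orthogonalGroup n ℝ => V.1 a b) :=
  (continuous_apply_apply a b).comp continuous_subtype_val

instance compactSpace_orthogonalGroup : CompactSpace (orthogonalGroup n ℝ) := by
  have hbox : IsCompact (Set.univ.pi fun _ => Set.univ.pi fun _ => Set.Icc (-1) 1 :
      Set (Matrix n n ℝ)) :=
    isCompact_univ_pi fun _ => isCompact_univ_pi fun _ => isCompact_Icc
  refine isCompact_iff_compactSpace.mp
    (hbox.of_isClosed_subset (isClosed_unitary (R := Matrix n n ℝ)) ?_)
  intro V hV a _ b _
  exact abs_le.mp (entry_norm_bound_of_unitary hV a b)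

lemma sum_orthogonalGroup_mul_col (V : orthogonalGroup n ℝ) (a b : n) :
    ∑ m, V.1 m a * V.1 m b = (1 : Matrix n n ℝ) a b := by
  rw [← (mem_orthogonalGroup_iff' n ℝ).1 V.2]
  rfl

lemma sum_orthogonalGroup_mul_row (V : orthogonalGroup n ℝ) (a b : n) :
    ∑ m, V.1 a m * V.1 b m = (1 : Matrix n n ℝ) a b := by
  rw [← (mem_orthogonalGroup_iff n ℝ).1 V.2]
  rfl

lemma permMatrix_mem_orthogonalGroup (σ : Equiv.Perm n) :
    σ.permMatrix ℝ ∈ orthogonalGroup n ℝ := by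
  rw [mem_orthogonalGroup_iff', transpose_permMatrix, ← permMatrix_mul, mul_inv_cancel,
    permMatrix_one]

/-- For `u = 0` the junk value `2 / 0 = 0` makes this the identity. -/
noncomputable def householder (u : n → ℝ) : Matrix n n ℝ :=
  1 - (2 / (u ⬝ᵥ u)) • vecMulVec u u

lemma householder_mem_orthogonalGroup (u : n → ℝ) : householder u ∈ orthogonalGroup n ℝ := by
  rw [mem_orthogonalGroup_iff', householder]
  have hsymm : (vecMulVec u u)ᵀ = vecMulVec u u := by
    ext; simp [vecMulVec_apply, mul_comm]
  rw [transpose_sub, transpose_one, transpose_smul, hsymm]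
  simp only [sub_mul, mul_sub, one_mul, mul_one, smul_mul_smul_comm, vecMulVec_mul_vecMulVec,
    vecMulVec_smul, smul_smul]
  have hcoef : 2 / u ⬝ᵥ u * (2 / u ⬝ᵥ u) * u ⬝ᵥ u = 2 / u ⬝ᵥ u + 2 / u ⬝ᵥ u := by
    rcases eq_or_ne (u ⬝ᵥ u) 0 with h | h
    · simp [h]
    · field_simp; ring
  rw [hcoef, add_smul]
  abel

lemma householder_mul (u : n → ℝ) (M : Matrix n n ℝ) :
    householder u * M = M - (2 / (u ⬝ᵥ u)) • vecMulVec u (u ᵥ* M) := by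
  rw [householder, sub_mul, one_mul, smul_mul, vecMulVec_mul]

lemma householder_single_add_single_mul_apply {i j : n} (hij : i ≠ j) (t : ℝ)
    (M : Matrix n n ℝ) (k : n) :
    (householder (Pi.single i 1 + Pi.single j t : n → ℝ) * M) i k =
      ((t ^ 2 - 1) * M i k - 2 * t * M j k) / (1 + t ^ 2) := by
  simp [householder_mul, vecMulVec_apply, dotProduct_add, dotProduct_single, add_vecMul, hij,
    Ne.symm hij]
  field_simp
  ring

variable {μ : Measure (orthogonalGroup n ℝ)}

lemma integral_submatrix_perm_id [μ.IsMulLeftInvariant] (σ : Equiv.Perm n)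
    (F : Matrix n n ℝ → ℝ) : ∫ V, F (V.1.submatrix σ id) ∂μ = ∫ V, F V.1 ∂μ := by
  simpa [PEquiv.toMatrix_toPEquiv_mul] using
    integral_mul_left_eq_self (μ := μ) (fun V => F V.1)
      ⟨σ.permMatrix ℝ, permMatrix_mem_orthogonalGroup σ⟩

lemma integral_submatrix_id_perm [μ.IsMulRightInvariant] (σ : Equiv.Perm n)
    (F : Matrix n n ℝ → ℝ) : ∫ V, F (V.1.submatrix id σ) ∂μ = ∫ V, F V.1 ∂μ := by
  simpa [PEquiv.mul_toMatrix_toPEquiv, Equiv.Perm.inv_def] using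
    integral_mul_right_eq_self (μ := μ) (fun V => F V.1)
      ⟨σ⁻¹.permMatrix ℝ, permMatrix_mem_orthogonalGroup σ⁻¹⟩

lemma integral_householder_mul [μ.IsMulLeftInvariant] (u : n → ℝ) (F : Matrix n n ℝ → ℝ) :
    ∫ V, F (householder u * V.1) ∂μ = ∫ V, F V.1 ∂μ :=
  integral_mul_left_eq_self (μ := μ) (fun V => F V.1)
    ⟨householder u, householder_mem_orthogonalGroup u⟩

lemma card_mul_integral_orthogonalGroup_sq [IsProbabilityMeasure μ] [μ.IsMulLeftInvariant]
    (i k : n) : Fintype.card n * ∫ V, V.1 i k ^ 2 ∂μ = 1 := by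
  have hrow (m : n) : ∫ V, V.1 m k ^ 2 ∂μ = ∫ V, V.1 i k ^ 2 ∂μ := by
    simpa using integral_submatrix_perm_id (μ := μ) (Equiv.swap m i) (fun M => M i k ^ 2)
  calc Fintype.card n * ∫ V, V.1 i k ^ 2 ∂μ = ∑ m, ∫ V, V.1 m k ^ 2 ∂μ := by simp [hrow]
    _ = ∫ V, ∑ m, V.1 m k ^ 2 ∂μ :=
      (integral_finsetSum _ fun _ _ => (by fun_prop : Continuous _).integrable_of_compactSpace).symm
    _ = 1 := by simp [sq, sum_orthogonalGroup_mul_col]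

lemma integral_orthogonalGroup_pow_four_add [IsFiniteMeasure μ] [μ.IsMulLeftInvariant]
    {i j : n} (hij : i ≠ j) (k : n) :
    ∫ V, V.1 i k ^ 4 ∂μ + (Fintype.card n - 1) * ∫ V, V.1 i k ^ 2 * V.1 j k ^ 2 ∂μ =
      ∫ V, V.1 i k ^ 2 ∂μ := by
  have hrow (m : n) (hm : m ≠ i) :
      ∫ V, V.1 i k ^ 2 * V.1 m k ^ 2 ∂μ = ∫ V, V.1 i k ^ 2 * V.1 j k ^ 2 ∂μ := by
    simpa [Equiv.swap_apply_of_ne_of_ne hm.symm hij] using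
      integral_submatrix_perm_id (μ := μ) (Equiv.swap m j) (fun M => M i k ^ 2 * M j k ^ 2)
  calc _ = ∑ m, ∫ V, V.1 i k ^ 2 * V.1 m k ^ 2 ∂μ := by
        rw [Finset.sum_univ_eq_add_card_sub_one_mul hrow]
        norm_num [← pow_add]
    _ = ∫ V, V.1 i k ^ 2 * ∑ m, V.1 m k ^ 2 ∂μ := by
      rw [← integral_finsetSum _ fun _ _ =>
        (by fun_prop : Continuous _).integrable_of_compactSpace]
      simp only [Finset.mul_sum]
    _ = ∫ V, V.1 i k ^ 2 ∂μ := by simp [sq, sum_orthogonalGroup_mul_col]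

lemma integral_orthogonalGroup_pow_four_eq [IsFiniteMeasure μ] [μ.IsMulLeftInvariant]
    {i j : n} (hij : i ≠ j) (k : n) :
    ∫ V, V.1 i k ^ 4 ∂μ = 3 * ∫ V, V.1 i k ^ 2 * V.1 j k ^ 2 ∂μ := by
  have hswap : ∫ V, V.1 j k ^ 4 ∂μ = ∫ V, V.1 i k ^ 4 ∂μ := by
    simpa using integral_submatrix_perm_id (μ := μ) (Equiv.swap i j) (fun M => M i k ^ 4)
  have hrefl (t : ℝ) : ∫ V, ((t ^ 2 - 1) * V.1 i k - 2 * t * V.1 j k) ^ 4 ∂μ =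
      (1 + t ^ 2) ^ 4 * ∫ V, V.1 i k ^ 4 ∂μ := by
    have := integral_householder_mul (μ := μ) (Pi.single i 1 + Pi.single j t)
      (fun M => M i k ^ 4)
    simp only [householder_single_add_single_mul_apply hij, div_pow, integral_div] at this
    rw [← this]
    field_simp
  have hsum : ∫ V, (3 * V.1 i k - 4 * V.1 j k) ^ 4 ∂μ + ∫ V, (3 * V.1 i k + 4 * V.1 j k) ^ 4 ∂μ
      = 162 * ∫ V, V.1 i k ^ 4 ∂μ + 512 * ∫ V, V.1 j k ^ 4 ∂μ
        + 1728 * ∫ V, V.1 i k ^ 2 * V.1 j k ^ 2 ∂μ := by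
    rw [← integral_add (by fun_prop : Continuous _).integrable_of_compactSpace
      (by fun_prop : Continuous _).integrable_of_compactSpace]
    calc _ = ∫ V, (162 * V.1 i k ^ 4 + 512 * V.1 j k ^ 4
          + 1728 * (V.1 i k ^ 2 * V.1 j k ^ 2)) ∂μ := by
          congr 1 with V; ring
      _ = _ := by
          rw [integral_add, integral_add, integral_const_mul, integral_const_mul,
            integral_const_mul]
          all_goals exact (by fun_prop : Continuous _).integrable_of_compactSpace
  have hplus := hrefl 2
  have hminus := hrefl (-2)
  norm_num at hplus hminus
  linarith

lemma integral_orthogonalGroup_sq_mul_sq_add [IsFiniteMeasure μ] [μ.IsMulRightInvariant]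
    {i j l k : n} (hij : i ≠ j) (hlk : l ≠ k) :
    ∫ V, V.1 i k ^ 2 * V.1 j k ^ 2 ∂μ +
      (Fintype.card n - 1) * ∫ V, V.1 i l * V.1 j l * V.1 i k * V.1 j k ∂μ = 0 := by
  have hcol (m : n) (hm : m ≠ k) : ∫ V, V.1 i m * V.1 j m * V.1 i k * V.1 j k ∂μ =
      ∫ V, V.1 i l * V.1 j l * V.1 i k * V.1 j k ∂μ := by
    simpa [Equiv.swap_apply_of_ne_of_ne hm.symm hlk.symm] using
      integral_submatrix_id_perm (μ := μ) (Equiv.swap m l)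
        (fun M => M i l * M j l * M i k * M j k)
  calc _ = ∑ m, ∫ V, V.1 i m * V.1 j m * V.1 i k * V.1 j k ∂μ := by
        rw [Finset.sum_univ_eq_add_card_sub_one_mul hcol]
        congr 2 with V; ring
    _ = ∫ V, (∑ m, V.1 i m * V.1 j m) * V.1 i k * V.1 j k ∂μ := by
      rw [← integral_finsetSum _ fun _ _ =>
        (by fun_prop : Continuous _).integrable_of_compactSpace]
      simp only [Finset.sum_mul]
    _ = 0 := by simp [sum_orthogonalGroup_mul_row, hij]

theorem integral_orthogonalGroup_minor_entries_prod [IsProbabilityMeasure μ]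
    [μ.IsMulLeftInvariant] [μ.IsMulRightInvariant] {i j l k : n} (hij : i ≠ j) (hlk : l ≠ k) :
    ∫ V, V.1 i l * V.1 j l * V.1 i k * V.1 j k ∂μ =
      -1 / ((Fintype.card n - 1) * Fintype.card n * (Fintype.card n + 2)) := by
  have hN : (2 : ℝ) ≤ Fintype.card n := by
    exact_mod_cast Fintype.one_lt_card_iff.mpr ⟨i, j, hij⟩
  have hnorm := card_mul_integral_orthogonalGroup_sq (μ := μ) i k
  have hcolumn := integral_orthogonalGroup_pow_four_add (μ := μ) hij k
  have hfourth := integral_orthogonalGroup_pow_four_eq (μ := μ) hij k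
  have hrows := integral_orthogonalGroup_sq_mul_sq_add (μ := μ) hij hlk
  rw [eq_div_iff (mul_pos (mul_pos (by linarith) (by linarith)) (by linarith)).ne']
  linear_combination (Fintype.card n * (Fintype.card n + 2) : ℝ) * hrows
    - Fintype.card n * hcolumn + Fintype.card n * hfourth - hnorm

end Matrix

theorem stmt7_general (p : ℕ)
    (μ : Measure ↥(Matrix.orthogonalGroup (Fin p) ℝ)) [IsProbabilityMeasure μ]
    (hleft : ∀ g : ↥(Matrix.orthogonalGroup (Fin p) ℝ),
      μ.map (fun V => g * V) = μ)
    (hright : ∀ g : ↥(Matrix.orthogonalGroup (Fin p) ℝ),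
      μ.map (fun V => V * g) = μ)
    (i j l k : Fin p) (hij : i ≠ j) (hlk : l ≠ k) :
    ∫ V, ((V : Matrix (Fin p) (Fin p) ℝ) i l) * ((V : Matrix (Fin p) (Fin p) ℝ) j l)
        * ((V : Matrix (Fin p) (Fin p) ℝ) i k) * ((V : Matrix (Fin p) (Fin p) ℝ) j k) ∂μ
      = -1 / (((p : ℝ) - 1) * (p : ℝ) * ((p : ℝ) + 2)) := by
  have : μ.IsMulLeftInvariant := ⟨hleft⟩
  have : μ.IsMulRightInvariant := ⟨hright⟩
  simpa using integral_orthogonalGroup_minor_entries_prod (μ := μ) hij hlk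

/-- Lemma 3, part 3: for a Haar-distributed `p × p` orthogonal matrix, distinct rows
`i ≠ j` and distinct columns `l ≠ k`,
`E[v_{il} v_{jl} v_{ik} v_{jk}] = −1/((p−1)p(p+2))`. -/
theorem stmt7 (p : ℕ) (hp : 1 < p)
    (μ : Measure ↥(Matrix.orthogonalGroup (Fin p) ℝ)) [IsProbabilityMeasure μ]
    (hleft : ∀ g : ↥(Matrix.orthogonalGroup (Fin p) ℝ),
      μ.map (fun V => g * V) = μ)
    (hright : ∀ g : ↥(Matrix.orthogonalGroup (Fin p) ℝ),
      μ.map (fun V => V * g) = μ)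
    (i j l k : Fin p) (hij : i ≠ j) (hlk : l ≠ k) :
    ∫ V, ((V : Matrix (Fin p) (Fin p) ℝ) i l) * ((V : Matrix (Fin p) (Fin p) ℝ) j l)
        * ((V : Matrix (Fin p) (Fin p) ℝ) i k) * ((V : Matrix (Fin p) (Fin p) ℝ) j k) ∂μ
      = -1 / (((p : ℝ) - 1) * (p : ℝ) * ((p : ℝ) + 2)) :=
  stmt7_general p μ hleft hright i j l k hij hlk
end

section
/- Fix positive reals n, pS, c, s, σ² with s > 0 and pS ≥ 1, n ≥ 1. Define for pF > 0 with p̄ = pS + pF > n + 1 the function ε(pF) as in Theorem 1's overparametrized formula. Then the derivative dε/dpF, viewed as a function of the real variable pF, is asymptotically equivalent to (2n/pF²)·s as pF → ∞; in particular the derivative is eventually strictly positive. -/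
set_option maxHeartbeats 1000000

open Filter

/-- Proof of Corollary 1(ii): `pF² · ε′(pF) → 2·n·s` as `pF → ∞`, so the derivative of the
overparametrized expected MSE is eventually strictly positive. -/
theorem stmt16 (n pS c s σ2 : ℝ) (hn : 1 ≤ n) (hpS : 1 ≤ pS) (hs : 0 < s)
    (hc : 0 < c) (hσ : 0 < σ2)
    (ε : ℝ → ℝ)
    (hε : ε = fun pF =>
      (n * pS / ((pS + pF) * (pS + pF - n - 1))) * (c + σ2)
        + (1 - n / (pS + pF)
            - pF * n * (pS + pF - n) / ((pS + pF - 1) * (pS + pF) * (pS + pF + 2))) * s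
        + c) :
    Tendsto (fun pF : ℝ => pF ^ 2 * deriv ε pF) atTop (nhds (2 * n * s)) ∧
    ∃ P : ℝ, ∀ pF : ℝ, P < pF → 0 < deriv ε pF := by
  subst hε
  -- the explicit derivative
  set f : ℝ → ℝ := fun x =>
      ((0 * ((pS + x) * (pS + x - n - 1)) - n * pS * (1 * (pS + x - n - 1) + (pS + x) * 1))
           / ((pS + x) * (pS + x - n - 1))^2) * (c + σ2)
        + ( -((0 * (pS + x) - n * 1) / (pS + x)^2)
            - ((1 * n * (pS + x - n) + x * n * 1) * ((pS + x - 1) * (pS + x) * (pS + x + 2))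
                - x * n * (pS + x - n) *
                  ((1 * (pS + x) + (pS + x - 1) * 1) * (pS + x + 2) + (pS + x - 1) * (pS + x) * 1))
              / ((pS + x - 1) * (pS + x) * (pS + x + 2))^2 ) * s with hf
  -- the limit function in the variable t = x⁻¹
  set G : ℝ → ℝ := fun t =>
      (-(n * pS) * ((2 * pS - n - 1) * t + 2) * t
          / ((pS * t + 1) * ((pS - n - 1) * t + 1))^2) * (c + σ2)
      + (n / (pS * t + 1)^2
         - n * ( (2 + (pS - n) * t) * ((pS - 1) * t + 1) * (pS * t + 1) * ((pS + 2) * t + 1)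
              - ((pS - n) * t + 1) *
                ((2 + (2 * pS - 1) * t) * ((pS + 2) * t + 1)
                  + ((pS - 1) * t + 1) * (pS * t + 1)) )
          / ( ((pS - 1) * t + 1) * (pS * t + 1) * ((pS + 2) * t + 1) )^2) * s with hG
  have hderiv : ∀ x : ℝ, n + 2 < x →
      HasDerivAt (fun pF =>
        (n * pS / ((pS + pF) * (pS + pF - n - 1))) * (c + σ2)
          + (1 - n / (pS + pF)
              - pF * n * (pS + pF - n) / ((pS + pF - 1) * (pS + pF) * (pS + pF + 2))) * s
          + c) (f x) x := by
    intro x hx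
    have hx0 : (0:ℝ) < x := by nlinarith
    have hp : (0:ℝ) < pS + x := by nlinarith
    have hp1 : (0:ℝ) < pS + x - n - 1 := by nlinarith
    have hp2 : (0:ℝ) < pS + x - 1 := by nlinarith
    have hp3 : (0:ℝ) < pS + x + 2 := by nlinarith
    have hid : HasDerivAt (fun y : ℝ => pS + y) 1 x := (hasDerivAt_id x).const_add pS
    have h1 : HasDerivAt (fun y : ℝ => pS + y - n - 1) 1 x := (hid.sub_const n).sub_const 1
    have h2 : HasDerivAt (fun y : ℝ => pS + y - 1) 1 x := hid.sub_const 1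
    have h3 : HasDerivAt (fun y : ℝ => pS + y + 2) 1 x := hid.add_const 2
    have hv : HasDerivAt (fun y : ℝ => (pS + y) * (pS + y - n - 1))
        (1 * (pS + x - n - 1) + (pS + x) * 1) x := hid.mul h1
    have t1 : HasDerivAt (fun y : ℝ => n * pS / ((pS + y) * (pS + y - n - 1)))
        ((0 * ((pS + x) * (pS + x - n - 1)) - n * pS * (1 * (pS + x - n - 1) + (pS + x) * 1))
          / ((pS + x) * (pS + x - n - 1))^2) x :=
      (hasDerivAt_const x (n * pS)).div hv (by positivity)
    have t2 : HasDerivAt (fun y : ℝ => 1 - n / (pS + y))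
        (-((0 * (pS + x) - n * 1) / (pS + x)^2)) x :=
      ((hasDerivAt_const x n).div hid (by positivity)).const_sub 1
    have hN : HasDerivAt (fun y : ℝ => y * n * (pS + y - n))
        (1 * n * (pS + x - n) + x * n * 1) x :=
      ((hasDerivAt_id x).mul_const n).mul ((hid.sub_const n))
    have hD : HasDerivAt (fun y : ℝ => (pS + y - 1) * (pS + y) * (pS + y + 2))
        ((1 * (pS + x) + (pS + x - 1) * 1) * (pS + x + 2) + (pS + x - 1) * (pS + x) * 1) x :=
      ((h2.mul hid).mul h3)
    have t3 : HasDerivAt (fun y : ℝ =>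
        y * n * (pS + y - n) / ((pS + y - 1) * (pS + y) * (pS + y + 2)))
        (((1 * n * (pS + x - n) + x * n * 1) * ((pS + x - 1) * (pS + x) * (pS + x + 2))
           - x * n * (pS + x - n) *
             ((1 * (pS + x) + (pS + x - 1) * 1) * (pS + x + 2) + (pS + x - 1) * (pS + x) * 1))
          / ((pS + x - 1) * (pS + x) * (pS + x + 2))^2) x :=
      hN.div hD (by positivity)
    exact ((t1.mul_const (c + σ2)).add ((t2.sub t3).mul_const s)).add_const c
  have hdf : ∀ x : ℝ, n + 2 < x →
      deriv (fun pF =>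
        (n * pS / ((pS + pF) * (pS + pF - n - 1))) * (c + σ2)
          + (1 - n / (pS + pF)
              - pF * n * (pS + pF - n) / ((pS + pF - 1) * (pS + pF) * (pS + pF + 2))) * s
          + c) x = f x := fun x hx => (hderiv x hx).deriv
  -- eventual equality  x² f x = G x⁻¹
  have hfeq : ∀ x : ℝ, n + 2 < x → x ^ 2 * f x = G x⁻¹ := by
    intro x hx
    have hx0 : (0:ℝ) < x := by nlinarith
    have hp : (0:ℝ) < pS + x := by nlinarith
    have hp1 : (0:ℝ) < pS + x - n - 1 := by nlinarith
    have hp2 : (0:ℝ) < pS + x - 1 := by nlinarith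
    have hp3 : (0:ℝ) < pS + x + 2 := by nlinarith
    have e1 : pS * x⁻¹ + 1 = (pS + x) / x := by field_simp
    have e2 : (pS - n - 1) * x⁻¹ + 1 = (pS + x - n - 1) / x := by field_simp; ring
    have e3 : (pS - 1) * x⁻¹ + 1 = (pS + x - 1) / x := by field_simp; ring
    have e4 : (pS + 2) * x⁻¹ + 1 = (pS + x + 2) / x := by field_simp; ring
    have eqA : x ^ 2 * ((0 * ((pS + x) * (pS + x - n - 1))
            - n * pS * (1 * (pS + x - n - 1) + (pS + x) * 1))
           / ((pS + x) * (pS + x - n - 1))^2)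
        = -(n * pS) * ((2 * pS - n - 1) * x⁻¹ + 2) * x⁻¹
          / ((pS * x⁻¹ + 1) * ((pS - n - 1) * x⁻¹ + 1))^2 := by
      rw [e1, e2]; field_simp; ring
    have eqB : x ^ 2 * (-((0 * (pS + x) - n * 1) / (pS + x)^2))
        = n / (pS * x⁻¹ + 1)^2 := by
      rw [e1]; field_simp; ring
    have eqC : x ^ 2 * (((1 * n * (pS + x - n) + x * n * 1)
              * ((pS + x - 1) * (pS + x) * (pS + x + 2))
              - x * n * (pS + x - n) *
                ((1 * (pS + x) + (pS + x - 1) * 1) * (pS + x + 2) + (pS + x - 1) * (pS + x) * 1))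
            / ((pS + x - 1) * (pS + x) * (pS + x + 2))^2)
        = n * ( (2 + (pS - n) * x⁻¹) * ((pS - 1) * x⁻¹ + 1) * (pS * x⁻¹ + 1) * ((pS + 2) * x⁻¹ + 1)
              - ((pS - n) * x⁻¹ + 1) *
                ((2 + (2 * pS - 1) * x⁻¹) * ((pS + 2) * x⁻¹ + 1)
                  + ((pS - 1) * x⁻¹ + 1) * (pS * x⁻¹ + 1)) )
          / ( ((pS - 1) * x⁻¹ + 1) * (pS * x⁻¹ + 1) * ((pS + 2) * x⁻¹ + 1) )^2 := by
      rw [e1, e3, e4]; field_simp; ring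
    calc x ^ 2 * f x
        = (x ^ 2 * ((0 * ((pS + x) * (pS + x - n - 1))
            - n * pS * (1 * (pS + x - n - 1) + (pS + x) * 1))
           / ((pS + x) * (pS + x - n - 1))^2)) * (c + σ2)
          + (x ^ 2 * (-((0 * (pS + x) - n * 1) / (pS + x)^2))
             - x ^ 2 * (((1 * n * (pS + x - n) + x * n * 1)
              * ((pS + x - 1) * (pS + x) * (pS + x + 2))
              - x * n * (pS + x - n) *
                ((1 * (pS + x) + (pS + x - 1) * 1) * (pS + x + 2) + (pS + x - 1) * (pS + x) * 1))
            / ((pS + x - 1) * (pS + x) * (pS + x + 2))^2)) * s := by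
          simp only [hf]; ring
      _ = G x⁻¹ := by rw [eqA, eqB, eqC]
  -- continuity of G at 0 and its value there
  have hG0 : G 0 = 2 * n * s := by
    simp only [hG]; norm_num; left; ring
  have hGcont : ContinuousAt G 0 := by
    simp only [hG]
    fun_prop (disch := norm_num)
  -- the main limit
  have hmain : Tendsto (fun pF : ℝ => pF ^ 2 * deriv (fun pF =>
      (n * pS / ((pS + pF) * (pS + pF - n - 1))) * (c + σ2)
        + (1 - n / (pS + pF)
            - pF * n * (pS + pF - n) / ((pS + pF - 1) * (pS + pF) * (pS + pF + 2))) * s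
        + c) pF) atTop (nhds (2 * n * s)) := by
    have hcomp : Tendsto (fun x : ℝ => G x⁻¹) atTop (nhds (2 * n * s)) := by
      rw [← hG0]
      exact hGcont.tendsto.comp tendsto_inv_atTop_zero
    refine hcomp.congr' ?_
    filter_upwards [eventually_gt_atTop (n + 2)] with x hx
    rw [hdf x hx, hfeq x hx]
  refine ⟨hmain, ?_⟩
  have hpos : ∀ᶠ x : ℝ in atTop, 0 < x ^ 2 * deriv (fun pF =>
      (n * pS / ((pS + pF) * (pS + pF - n - 1))) * (c + σ2)
        + (1 - n / (pS + pF)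
            - pF * n * (pS + pF - n) / ((pS + pF - 1) * (pS + pF) * (pS + pF + 2))) * s
        + c) x := by
    have : (0:ℝ) < 2 * n * s := by nlinarith
    exact hmain.eventually (eventually_gt_nhds this)
  obtain ⟨P, hP⟩ := (hpos.and (eventually_gt_atTop (0:ℝ))).exists_forall_of_atTop
  refine ⟨P, fun x hx => ?_⟩
  obtain ⟨h1, h2⟩ := hP x hx.le
  nlinarith [sq_nonneg x]
end
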